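/- arXiv:1103.0176 — 5 statements merged into one kernel-verified Lean document; each statement's English description precedes it below -/
import Mathlib

section
/- Let r ∈ (0, 1), b > 0 with b + r = 1, h ≥ 0, c > 0, and let (φ, ψ) be a monotone wavefront profile of the Belousov–Zhabotinsky system with parameters (r, b, h, c). Then φ(t − c·h) ≤ ψ(t) ≤ φ(t) for all t ∈ ℝ; in particular, if h = 0 then φ(t) = ψ(t) for all t ∈ ℝ. -/
open Real Filter Asymptotics

/-- A monotone wavefront profile of the (delayed) Belousov–Zhabotinsky system
with parameters `(r, b, h, c)`. -/
structure IsBZWavefront (r b h c : ℝ) (φ ψ : ℝ → ℝ) : Prop where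
  phi_smooth : ContDiff ℝ 2 φ
  psi_smooth : ContDiff ℝ 2 ψ
  eq_phi : ∀ t : ℝ,
    deriv (deriv φ) t - c * deriv φ t + φ t * (1 - r - φ t + r * ψ t) = 0
  eq_psi : ∀ t : ℝ,
    deriv (deriv ψ) t - c * deriv ψ t + b * φ (t - c * h) * (1 - ψ t) = 0
  phi_pos : ∀ t : ℝ, 0 < φ t
  phi_lt_one : ∀ t : ℝ, φ t < 1
  psi_pos : ∀ t : ℝ, 0 < ψ t
  psi_lt_one : ∀ t : ℝ, ψ t < 1
  dphi_pos : ∀ t : ℝ, 0 < deriv φ t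
  dpsi_pos : ∀ t : ℝ, 0 < deriv ψ t
  phi_bot : Tendsto φ atBot (nhds 0)
  psi_bot : Tendsto ψ atBot (nhds 0)
  phi_top : Tendsto φ atTop (nhds 1)
  psi_top : Tendsto ψ atTop (nhds 1)

/-!
Both inequalities follow from a maximum principle for a difference `w` of two profiles
with the same limits at `±∞`: a positive value of `w` forces a positive global maximum,
where `w' = 0` and `w'' ≤ 0`. Using `b = 1 - r` and `w' = 0`, the two equations give
`w'' = b (1 - ψ) (φ(t) - φ(t - ch)) + φ (ψ - φ)` for `w = ψ - φ` and
`w'' = φ(s) ((φ(s) - ψ(t)) + r (ψ(t) - ψ(s)))` for `w = φ(· - ch) - ψ`, `s = t - ch`;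
both are positive where `w > 0` because the profiles are increasing.
-/

/-- No differentiability is needed: if `f'' x > 0`, the second derivative test makes `x` also a
local minimum, so `f` is locally constant and `f'' x = 0`. -/
theorem IsLocalMax.deriv_deriv_nonpos {f : ℝ → ℝ} {x : ℝ} (hmax : IsLocalMax f x)
    (hc : ContinuousAt f x) : deriv (deriv f) x ≤ 0 := by
  by_contra! hpos
  have hmin := isLocalMin_of_deriv_deriv_pos hpos hmax.deriv_eq_zero hc
  have hconst : f =ᶠ[nhds x] fun _ => f x := by
    filter_upwards [hmax, hmin] with y hle hge using le_antisymm hle hge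
  have : deriv (deriv f) x = 0 := by
    rw [hconst.deriv.deriv_eq]
    simp
  linarith

theorem nonpos_of_tendsto_zero_of_deriv_deriv_pos {w : ℝ → ℝ} (hw : Continuous w)
    (hbot : Tendsto w atBot (nhds 0)) (htop : Tendsto w atTop (nhds 0))
    (hconvex : ∀ t, 0 < w t → deriv w t = 0 → 0 < deriv (deriv w) t) (a : ℝ) :
    w a ≤ 0 := by
  by_contra! ha
  obtain ⟨t, hmax⟩ := hw.exists_forall_ge' a <| by
    rw [cocompact_eq_atBot_atTop, eventually_sup]
    exact ⟨(hbot.eventually_lt_const ha).mono fun _ => le_of_lt,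
      (htop.eventually_lt_const ha).mono fun _ => le_of_lt⟩
  have hloc : IsLocalMax w t := Eventually.of_forall hmax
  have := hconvex t (ha.trans_le (hmax a)) hloc.deriv_eq_zero
  linarith [hloc.deriv_deriv_nonpos hw.continuousAt]

theorem le_of_tendsto_of_deriv_deriv_lt {f g : ℝ → ℝ} {l m : ℝ}
    (hf : ContDiff ℝ 2 f) (hg : ContDiff ℝ 2 g)
    (hfbot : Tendsto f atBot (nhds l)) (hgbot : Tendsto g atBot (nhds l))
    (hftop : Tendsto f atTop (nhds m)) (hgtop : Tendsto g atTop (nhds m))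
    (hconvex : ∀ t, g t < f t → deriv f t = deriv g t →
      deriv (deriv g) t < deriv (deriv f) t) (t : ℝ) :
    f t ≤ g t := by
  have hf1 := hf.differentiable two_ne_zero
  have hg1 := hg.differentiable two_ne_zero
  have hderiv : deriv (fun s => f s - g s) = fun s => deriv f s - deriv g s :=
    funext fun s => deriv_sub (hf1 s) (hg1 s)
  have hderiv2 (s : ℝ) :
      deriv (deriv (fun s => f s - g s)) s = deriv (deriv f) s - deriv (deriv g) s := by
    rw [hderiv]
    exact deriv_sub (hf.differentiable_deriv_two s) (hg.differentiable_deriv_two s)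
  have key := nonpos_of_tendsto_zero_of_deriv_deriv_pos (w := fun s => f s - g s)
    (hf1.continuous.sub hg1.continuous)
    (by simpa using hfbot.sub hgbot) (by simpa using hftop.sub hgtop)
    (fun s hpos hcrit => by
      rw [hderiv2, sub_pos]
      rw [hderiv, sub_eq_zero] at hcrit
      exact hconvex s (sub_pos.mp hpos) hcrit) t
  linarith

namespace IsBZWavefront

variable {r b h c : ℝ} {φ ψ : ℝ → ℝ}

theorem psi_le_phi (hb : 0 < b) (hbr : b + r = 1) (hch : 0 ≤ c * h)
    (hw : IsBZWavefront r b h c φ ψ) (t : ℝ) : ψ t ≤ φ t := by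
  refine le_of_tendsto_of_deriv_deriv_lt hw.psi_smooth hw.phi_smooth hw.psi_bot hw.phi_bot
    hw.psi_top hw.phi_top (fun s hlt hcrit => ?_) t
  have hmono : φ (s - c * h) ≤ φ s :=
    (strictMono_of_deriv_pos hw.dphi_pos).monotone (by linarith)
  have hpos : 0 < b * (1 - ψ s) * (φ s - φ (s - c * h)) + φ s * (ψ s - φ s) := by
    have := hw.psi_lt_one s
    have := hw.phi_pos s
    positivity
  obtain rfl : r = 1 - b := by linarith
  linear_combination hpos - hw.eq_psi s + hw.eq_phi s - c * hcrit

theorem phi_shift_le_psi (hr : 0 < r) (hbr : b + r = 1) (hch : 0 ≤ c * h)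
    (hw : IsBZWavefront r b h c φ ψ) (t : ℝ) : φ (t - c * h) ≤ ψ t := by
  have hshift : ContDiff ℝ 2 fun t => φ (t - c * h) :=
    hw.phi_smooth.comp (contDiff_id.sub contDiff_const)
  refine le_of_tendsto_of_deriv_deriv_lt hshift hw.psi_smooth
    (hw.phi_bot.comp (tendsto_atBot_add_const_right _ _ tendsto_id)) hw.psi_bot
    (hw.phi_top.comp (tendsto_atTop_add_const_right _ _ tendsto_id)) hw.psi_top
    (fun s hlt hcrit => ?_) t
  have hshift_deriv : deriv (fun t => φ (t - c * h)) = fun t => deriv φ (t - c * h) :=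
    funext fun t => deriv_comp_sub_const φ (c * h) t
  rw [hshift_deriv] at hcrit ⊢
  rw [deriv_comp_sub_const]
  have hmono : ψ (s - c * h) ≤ ψ s :=
    (strictMono_of_deriv_pos hw.dpsi_pos).monotone (by linarith)
  have hpos : 0 < φ (s - c * h) * ((φ (s - c * h) - ψ s) + r * (ψ s - ψ (s - c * h))) := by
    have := hw.phi_pos (s - c * h)
    positivity
  obtain rfl : b = 1 - r := by linarith
  linear_combination hpos - hw.eq_phi (s - c * h) + hw.eq_psi s - c * hcrit

end IsBZWavefront

theorem bz_component_comparison_critical_sum_general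
    (r b h c : ℝ) (hr0 : 0 < r) (hb : 0 < b) (hbr : b + r = 1)
    (hh : 0 ≤ h) (hc : 0 < c)
    (φ ψ : ℝ → ℝ) (hw : IsBZWavefront r b h c φ ψ) :
    (∀ t : ℝ, φ (t - c * h) ≤ ψ t ∧ ψ t ≤ φ t) ∧
      (h = 0 → ∀ t : ℝ, φ t = ψ t) := by
  have hch : 0 ≤ c * h := mul_nonneg hc.le hh
  have hlower := hw.phi_shift_le_psi hr0 hbr hch
  have hupper := hw.psi_le_phi hb hbr hch
  refine ⟨fun t => ⟨hlower t, hupper t⟩, ?_⟩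
  rintro rfl t
  exact le_antisymm (by simpa using hlower t) (hupper t)

theorem bz_component_comparison_critical_sum
    (r b h c : ℝ) (hr0 : 0 < r) (hr1 : r < 1) (hb : 0 < b) (hbr : b + r = 1)
    (hh : 0 ≤ h) (hc : 0 < c)
    (φ ψ : ℝ → ℝ) (hw : IsBZWavefront r b h c φ ψ) :
    (∀ t : ℝ, φ (t - c * h) ≤ ψ t ∧ ψ t ≤ φ t) ∧
      (h = 0 → ∀ t : ℝ, φ t = ψ t) :=
  bz_component_comparison_critical_sum_general r b h c hr0 hb hbr hh hc φ ψ hw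
end

section
/- Let r ≥ 1, b > 0, h ≥ 0, c > 0, and let (φ, ψ) be a monotone wavefront profile of the Belousov–Zhabotinsky system with parameters (r, b, h, c). Then ψ(t) > φ(t) for all t ∈ ℝ. -/
open Real Filter Asymptotics

/-!
If `ψ ≤ φ` somewhere, then `u = φ - ψ`, which vanishes at `±∞`, attains a nonnegative
global maximum at some `t₁`. There `φ' = ψ'`, so the drift terms `c φ'`, `c ψ'` cancel and
`u''(t₁) = b φ(t₁ - ch)(1 - ψ(t₁)) - φ(t₁)(1 - r - φ(t₁) + r ψ(t₁))`. The first term is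
positive, and for `ψ ≤ φ`, `r ≥ 1` the reaction factor is at most `(1 - r)(1 - φ) ≤ 0`,
so `u''(t₁) > 0`, contradicting the maximum.
-/

open Topology

theorem IsLocalMax.deriv_deriv_nonpos_s3 {f : ℝ → ℝ} {a : ℝ} (h : IsLocalMax f a)
    (hf : ContinuousAt f a) : deriv (deriv f) a ≤ 0 := by
  by_contra! hpos
  have hmin : IsLocalMin f a := isLocalMin_of_deriv_deriv_pos hpos h.deriv_eq_zero hf
  have hconst : f =ᶠ[𝓝 a] fun _ => f a :=
    (hmin.and h).mono fun _ hx => le_antisymm hx.2 hx.1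
  have hderiv : deriv f =ᶠ[𝓝 a] fun _ => 0 :=
    hconst.eventuallyEq_nhds.mono fun _ hy => by rw [hy.deriv_eq, deriv_const]
  rw [hderiv.deriv_eq, deriv_const] at hpos
  exact lt_irrefl 0 hpos

theorem Continuous.exists_forall_ge_nonneg_of_tendsto_cocompact_zero {X : Type*}
    [TopologicalSpace X] {u : X → ℝ} (hu : Continuous u) (hlim : Tendsto u (cocompact X) (𝓝 0)) {x₀ : X}
    (hx₀ : 0 ≤ u x₀) : ∃ x₁, 0 ≤ u x₁ ∧ ∀ x, u x ≤ u x₁ := by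
  by_cases hpos : ∃ x, 0 < u x
  · obtain ⟨x, hx⟩ := hpos
    obtain ⟨x₁, hx₁⟩ := hu.exists_forall_ge' x
      ((hlim.eventually_lt_const hx).mono fun _ hy => hy.le)
    exact ⟨x₁, hx.le.trans (hx₁ x), hx₁⟩
  · simp only [not_exists, not_lt] at hpos
    exact ⟨x₀, hx₀, fun x => (hpos x).trans hx₀⟩

theorem deriv_deriv_sub {f g : ℝ → ℝ} (hf : ContDiff ℝ 2 f) (hg : ContDiff ℝ 2 g) (t : ℝ) :
    deriv (deriv (f - g)) t = deriv (deriv f) t - deriv (deriv g) t := by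
  have hsub : deriv (f - g) = deriv f - deriv g := funext fun s =>
    deriv_sub (hf.differentiable two_ne_zero s) (hg.differentiable two_ne_zero s)
  rw [hsub]
  exact deriv_sub (hf.differentiable_deriv_two t) (hg.differentiable_deriv_two t)

namespace IsBZWavefront

variable {r b h c : ℝ} {φ ψ : ℝ → ℝ}

theorem tendsto_sub_cocompact (hw : IsBZWavefront r b h c φ ψ) :
    Tendsto (φ - ψ) (cocompact ℝ) (𝓝 0) := by
  rw [cocompact_eq_atBot_atTop, tendsto_sup]
  refine ⟨?_, ?_⟩
  · rw [← sub_self 0]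
    exact hw.phi_bot.sub hw.psi_bot
  · rw [← sub_self 1]
    exact hw.phi_top.sub hw.psi_top

theorem deriv_deriv_psi_lt_deriv_deriv_phi (hw : IsBZWavefront r b h c φ ψ) (hr : 1 ≤ r)
    (hb : 0 < b) {t : ℝ} (hle : ψ t ≤ φ t) (hd : deriv φ t = deriv ψ t) :
    deriv (deriv ψ) t < deriv (deriv φ) t := by
  have hsource : 0 < b * φ (t - c * h) * (1 - ψ t) :=
    mul_pos (mul_pos hb (hw.phi_pos _)) (sub_pos.mpr (hw.psi_lt_one t))
  have hreaction : φ t * (1 - r - φ t + r * ψ t) ≤ 0 := by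
    have hfactor : 1 - r - φ t + r * ψ t ≤ (1 - r) * (1 - φ t) := by
      nlinarith
    have hneg : (1 - r) * (1 - φ t) ≤ 0 :=
      mul_nonpos_of_nonpos_of_nonneg (by linarith) (sub_nonneg.mpr (hw.phi_lt_one t).le)
    exact mul_nonpos_of_nonneg_of_nonpos (hw.phi_pos t).le (hfactor.trans hneg)
  have hphi := hw.eq_phi t
  rw [hd] at hphi
  linarith [hw.eq_psi t]

end IsBZWavefront

theorem bz_component_comparison_bistable_general
    (r b h c : ℝ) (hr : 1 ≤ r) (hb : 0 < b)
    (φ ψ : ℝ → ℝ) (hw : IsBZWavefront r b h c φ ψ) :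
    ∀ t : ℝ, φ t < ψ t := by
  intro t
  by_contra! hle
  have hcont : Continuous (φ - ψ) := hw.phi_smooth.continuous.sub hw.psi_smooth.continuous
  obtain ⟨t₁, hnonneg, hmax⟩ :=
    hcont.exists_forall_ge_nonneg_of_tendsto_cocompact_zero hw.tendsto_sub_cocompact
      (sub_nonneg.mpr hle)
  have hloc : IsLocalMax (φ - ψ) t₁ := Eventually.of_forall hmax
  have hd : deriv φ t₁ = deriv ψ t₁ := by
    have h0 := hloc.deriv_eq_zero
    rw [deriv_sub (hw.phi_smooth.differentiable two_ne_zero t₁)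
      (hw.psi_smooth.differentiable two_ne_zero t₁)] at h0
    linarith
  have hconcave := hloc.deriv_deriv_nonpos_s3 hcont.continuousAt
  rw [deriv_deriv_sub hw.phi_smooth hw.psi_smooth] at hconcave
  have hconvex := hw.deriv_deriv_psi_lt_deriv_deriv_phi hr hb (sub_nonneg.mp hnonneg) hd
  linarith

theorem bz_component_comparison_bistable
    (r b h c : ℝ) (hr : 1 ≤ r) (hb : 0 < b) (hh : 0 ≤ h) (hc : 0 < c)
    (φ ψ : ℝ → ℝ) (hw : IsBZWavefront r b h c φ ψ) :
    ∀ t : ℝ, φ t < ψ t :=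
  bz_component_comparison_bistable_general r b h c hr hb φ ψ hw
end

section
/- Let r ∈ (0, 1], b > 0, h ≥ 0, c > 0, and let (φ, ψ) be a monotone wavefront profile of the Belousov–Zhabotinsky system with parameters (r, b, h, c). Set M := max{1, 2b}. Then ψ(t)² < M·φ(t) for all t ∈ ℝ. -/
open Real Filter Asymptotics

/-!
With `M := max 1 (2b)`, the function `w := M φ - ψ²` tends to `0` at `-∞` and to `M - 1 ≥ 0`
at `+∞`, so if it is nonpositive somewhere it attains a global minimum at some `a` with
`w a ≤ 0`. There `w' = 0` and `w'' ≥ 0`; substituting both wave equations gives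
`w'' = 2bψ φ(a - ch)(1 - ψ) - Mφ(1 - r - φ + rψ) - 2ψ'²` at `a`, and since `φ` is increasing
and `Mφ ≤ ψ²` at `a`, the reaction part is nonpositive, so `w''(a) < 0`.
-/

open Set Topology

theorem IsLocalMin.nonneg_of_hasDerivAt_hasDerivAt {f f' : ℝ → ℝ} {a L : ℝ}
    (hmin : IsLocalMin f a) (hf : ∀ᶠ x in 𝓝 a, HasDerivAt f (f' x) x)
    (hf' : HasDerivAt f' L a) : 0 ≤ L := by
  by_contra! hL
  have hf'a : f' a = 0 := hmin.hasDerivAt_eq_zero hf.self_of_nhds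
  have hf'_neg : ∀ᶠ x in 𝓝[>] a, f' x < 0 := by
    filter_upwards [nhdsGT_le_nhdsNE a
        ((hasDerivAt_iff_tendsto_slope.mp hf').eventually (eventually_lt_nhds hL)),
      self_mem_nhdsWithin] with x hslope hx
    rw [slope_def_field, hf'a, sub_zero] at hslope
    exact neg_of_div_neg_left hslope (sub_nonneg.mpr hx.le)
  obtain ⟨u, hau : a < u, hu⟩ := mem_nhdsGT_iff_exists_Ioo_subset.mp
    (hf'_neg.and ((hf.filter_mono nhdsWithin_le_nhds).and (hmin.filter_mono nhdsWithin_le_nhds)))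
  obtain ⟨x, hax, hxu⟩ := exists_between hau
  have hsub : Ioc a x ⊆ Ioo a u := Ioc_subset_Ioo_right hxu
  have hcont : ContinuousOn f (Icc a x) := by
    intro y hy
    rcases hy.1.eq_or_lt with rfl | hay
    · exact hf.self_of_nhds.continuousAt.continuousWithinAt
    · exact (hu (hsub ⟨hay, hy.2⟩)).2.1.continuousAt.continuousWithinAt
  obtain ⟨y, hy, hslope⟩ := exists_hasDerivAt_eq_slope f f' hax hcont
    fun y hy => (hu (hsub (Ioo_subset_Ioc_self hy))).2.1
  have hfy : f' y < 0 := (hu (hsub (Ioo_subset_Ioc_self hy))).1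
  have hfx : f a ≤ f x := (hu (hsub (right_mem_Ioc.mpr hax))).2.2
  rw [hslope] at hfy
  linarith [neg_of_div_neg_left hfy (sub_nonneg.mpr hax.le)]

theorem Continuous.exists_forall_le_of_tendsto {f : ℝ → ℝ} (hf : Continuous f) {la lb t₀ : ℝ}
    (hbot : Tendsto f atBot (𝓝 la)) (htop : Tendsto f atTop (𝓝 lb))
    (hla : f t₀ ≤ la) (hlb : f t₀ ≤ lb) : ∃ x, f x ≤ f t₀ ∧ ∀ y, f x ≤ f y := by
  by_cases h : ∃ t₁, f t₁ < f t₀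
  · obtain ⟨t₁, ht₁⟩ := h
    have hcocompact : ∀ᶠ x in cocompact ℝ, f t₁ ≤ f x := by
      rw [cocompact_eq_atBot_atTop, eventually_sup]
      exact ⟨hbot.eventually (eventually_ge_nhds (ht₁.trans_le hla)),
        htop.eventually (eventually_ge_nhds (ht₁.trans_le hlb))⟩
    obtain ⟨x, hx⟩ := hf.exists_forall_le' t₁ hcocompact
    exact ⟨x, (hx t₁).trans ht₁.le, hx⟩
  · simp only [not_exists, not_lt] at h
    exact ⟨t₀, le_rfl, h⟩

/-- The reaction terms of the wave equations, with `p`, `q`, `p₀` standing for `φ t`, `ψ t`,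
`φ (t - c h)`. -/
theorem bz_reaction_le {r b M p q p₀ : ℝ} (hr : r ≤ 1) (hb : 0 ≤ b) (hM : 1 ≤ M)
    (hMb : 2 * b ≤ M) (hp : 0 ≤ p) (hq₀ : 0 < q) (hq₁ : q < 1) (hp₀ : p₀ ≤ p)
    (hMp : M * p ≤ q ^ 2) :
    2 * b * q * p₀ * (1 - q) ≤ M * p * (1 - r - p + r * q) := by
  have hbq : 0 ≤ 2 * b * q * (1 - q) := mul_nonneg (by positivity) (sub_nonneg.mpr hq₁.le)
  have hbM : 2 * b * (1 - q) ≤ M - q := by nlinarith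
  have hsat : q * (M - q) ≤ M * (1 - r - p + r * q) := by
    nlinarith [mul_nonneg (mul_nonneg (zero_le_one.trans hM) (sub_nonneg.mpr hr))
      (sub_nonneg.mpr hq₁.le)]
  calc 2 * b * q * p₀ * (1 - q) = 2 * b * q * (1 - q) * p₀ := by ring
    _ ≤ 2 * b * q * (1 - q) * p := mul_le_mul_of_nonneg_left hp₀ hbq
    _ ≤ q * (M - q) * p := mul_le_mul_of_nonneg_right (by nlinarith) hp
    _ ≤ M * (1 - r - p + r * q) * p := by gcongr
    _ = M * p * (1 - r - p + r * q) := by ring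

namespace IsBZWavefront

variable {r b h c : ℝ} {φ ψ : ℝ → ℝ}

theorem hasDerivAt_phi (hw : IsBZWavefront r b h c φ ψ) (t : ℝ) :
    HasDerivAt φ (deriv φ t) t :=
  (hw.phi_smooth.differentiable (by norm_num) t).hasDerivAt

theorem hasDerivAt_psi (hw : IsBZWavefront r b h c φ ψ) (t : ℝ) :
    HasDerivAt ψ (deriv ψ t) t :=
  (hw.psi_smooth.differentiable (by norm_num) t).hasDerivAt

theorem hasDerivAt_deriv_phi (hw : IsBZWavefront r b h c φ ψ) (t : ℝ) :
    HasDerivAt (deriv φ) (deriv (deriv φ) t) t :=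
  (hw.phi_smooth.differentiable_deriv_two t).hasDerivAt

theorem hasDerivAt_deriv_psi (hw : IsBZWavefront r b h c φ ψ) (t : ℝ) :
    HasDerivAt (deriv ψ) (deriv (deriv ψ) t) t :=
  (hw.psi_smooth.differentiable_deriv_two t).hasDerivAt

theorem not_isLocalMin_of_nonpos (hw : IsBZWavefront r b h c φ ψ) (hr : r ≤ 1) (hb : 0 ≤ b)
    (hch : 0 ≤ c * h) {M a : ℝ} (hM : 1 ≤ M) (hMb : 2 * b ≤ M)
    (hle : M * φ a - ψ a ^ 2 ≤ 0) : ¬IsLocalMin (fun t => M * φ t - ψ t ^ 2) a := by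
  intro hmin
  have hw' : ∀ t, HasDerivAt (fun t => M * φ t - ψ t ^ 2)
      (M * deriv φ t - 2 * (ψ t * deriv ψ t)) t := fun t =>
    (((hw.hasDerivAt_phi t).const_mul M).sub ((hw.hasDerivAt_psi t).pow 2)).congr_deriv
      (by norm_num; ring)
  have hw'' : HasDerivAt (fun t => M * deriv φ t - 2 * (ψ t * deriv ψ t))
      (M * deriv (deriv φ) a
        - 2 * (deriv ψ a * deriv ψ a + ψ a * deriv (deriv ψ) a)) a :=
    ((hw.hasDerivAt_deriv_phi a).const_mul M).sub
      (((hw.hasDerivAt_psi a).mul (hw.hasDerivAt_deriv_psi a)).const_mul 2)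
  have hcrit := hmin.hasDerivAt_eq_zero (hw' a)
  have hconvex := hmin.nonneg_of_hasDerivAt_hasDerivAt (.of_forall hw') hw''
  have hsecond : M * deriv (deriv φ) a - 2 * (deriv ψ a * deriv ψ a + ψ a * deriv (deriv ψ) a)
      = 2 * b * ψ a * φ (a - c * h) * (1 - ψ a) - M * φ a * (1 - r - φ a + r * ψ a)
        - 2 * deriv ψ a ^ 2 := by
    linear_combination M * hw.eq_phi a - 2 * ψ a * hw.eq_psi a + c * hcrit
  have hreact := bz_reaction_le hr hb hM hMb (hw.phi_pos a).le (hw.psi_pos a) (hw.psi_lt_one a)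
    ((strictMono_of_deriv_pos hw.dphi_pos).monotone (sub_le_self a hch)) (by linarith)
  linarith [pow_pos (hw.dpsi_pos a) 2]

end IsBZWavefront

theorem bz_square_comparison_general
    (r b h c : ℝ) (hr1 : r ≤ 1) (hb : 0 < b) (hh : 0 ≤ h) (hc : 0 < c)
    (φ ψ : ℝ → ℝ) (hw : IsBZWavefront r b h c φ ψ) :
    ∀ t : ℝ, (ψ t) ^ 2 < max 1 (2 * b) * φ t := by
  intro t₀
  by_contra! ht₀
  set M := max 1 (2 * b)
  have hM : 1 ≤ M := le_max_left _ _
  have hcont : Continuous fun t => M * φ t - ψ t ^ 2 :=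
    (continuous_const.mul hw.phi_smooth.continuous).sub (hw.psi_smooth.continuous.pow 2)
  have hbot : Tendsto (fun t => M * φ t - ψ t ^ 2) atBot (𝓝 0) := by
    simpa using (hw.phi_bot.const_mul M).sub (hw.psi_bot.pow 2)
  have htop : Tendsto (fun t => M * φ t - ψ t ^ 2) atTop (𝓝 (M - 1)) := by
    simpa using (hw.phi_top.const_mul M).sub (hw.psi_top.pow 2)
  obtain ⟨a, hat₀, hmin⟩ :=
    hcont.exists_forall_le_of_tendsto hbot htop (by linarith) (by linarith)
  exact hw.not_isLocalMin_of_nonpos hr1 hb.le (mul_nonneg hc.le hh) hM (le_max_right _ _)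
    (by linarith) (.of_forall hmin)

theorem bz_square_comparison
    (r b h c : ℝ) (hr0 : 0 < r) (hr1 : r ≤ 1) (hb : 0 < b) (hh : 0 ≤ h) (hc : 0 < c)
    (φ ψ : ℝ → ℝ) (hw : IsBZWavefront r b h c φ ψ) :
    ∀ t : ℝ, (ψ t) ^ 2 < max 1 (2 * b) * φ t :=
  bz_square_comparison_general r b h c hr1 hb hh hc φ ψ hw
end

section
/- Let r ∈ (0, 1], b > 0, h ≥ 0, c > 0, and let (φ, ψ) be a monotone wavefront profile of the Belousov–Zhabotinsky system with parameters (r, b, h, c). Then the limit lim_{t → −∞} φ'(t)/φ(t) exists, is finite, and belongs to the set {λ(c), μ(c)}, where λ(c) = (c − √(c² − 4(1 − r)))/2 and μ(c) = (c + √(c² − 4(1 − r)))/2 are the roots of the characteristic equation x² − cx + (1 − r) = 0. -/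
/-! The logarithmic derivative `u = φ'/φ` is positive and solves the Riccati equation
`u' = -(u² - c u + (1 - r)) + (φ - r ψ)`, whose forcing term `φ - r ψ` tends to `0` at `-∞`.
Near `-∞` such a solution cannot be large (it would blow up in finite backward time), and a band
of values on which `u'` has a definite sign is crossed in one direction only and in bounded time.
Bands around every non-root of `x² - c x + (1 - r)` therefore force the discriminant to be
nonnegative and `u` to settle at one of the two roots. -/

open Real Filter Asymptotics

open Set Topology

section Barriers

variable {f : ℝ → ℝ}

theorem lt_of_lt_of_deriv_neg_of_eq (hf : Differentiable ℝ f) {s t A : ℝ} (hst : s ≤ t)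
    (hd : ∀ x ∈ Ico s t, f x = A → deriv f x < 0) (ht : A < f t) : A < f s := by
  by_contra! hs
  have := image_le_of_deriv_right_lt_deriv_boundary' (B := fun _ => A) (B' := fun _ => 0)
    hf.continuous.continuousOn (fun x _ => (hf x).hasDerivAt.hasDerivWithinAt) hs
    continuousOn_const (fun _ _ => hasDerivWithinAt_const _ _ _) hd ⟨hst, le_rfl⟩
  linarith

theorem tendsto_atBot_atTop_of_deriv_le_neg {T κ : ℝ} (hκ : 0 < κ)
    (hf : DifferentiableOn ℝ f (Iic T)) (hd : ∀ t < T, deriv f t ≤ -κ) :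
    Tendsto f atBot atTop := by
  have hlin : ∀ s ≤ T, f T + κ * (T - s) ≤ f s := fun s hs => by
    have := (convex_Iic T).image_sub_le_mul_sub_of_deriv_le hf.continuousOn
      (hf.mono interior_subset) (fun x hx => hd x (by simpa using hx)) s hs T self_mem_Iic hs
    linarith
  refine tendsto_atTop_mono' atBot (eventually_atBot.2 ⟨T, hlin⟩) ?_
  exact tendsto_atTop_add_const_left _ _ <| Tendsto.const_mul_atTop hκ <|
    tendsto_atTop_add_const_left _ _ tendsto_neg_atBot_atTop

theorem eventually_atBot_gt_or_le_of_deriv_le_neg {α β κ : ℝ} (hf : Differentiable ℝ f)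
    (hαβ : α ≤ β) (hκ : 0 < κ)
    (hd : ∀ᶠ t in atBot, α ≤ f t → f t ≤ β → deriv f t ≤ -κ) :
    (∀ᶠ t in atBot, β < f t) ∨ ∀ᶠ t in atBot, f t ≤ α := by
  obtain ⟨T, hT⟩ := eventually_atBot.1 hd
  by_cases hescape : ∃ t ≤ T, β < f t
  · obtain ⟨t, htT, ht⟩ := hescape
    refine .inl (eventually_atBot.2 ⟨t, fun s hs => lt_of_lt_of_deriv_neg_of_eq hf hs ?_ ht⟩)
    intro x hx hfx
    exact (hT x (hx.2.le.trans htT) (hfx ▸ hαβ) hfx.le).trans_lt (neg_neg_of_pos hκ)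
  push Not at hescape
  refine .inr (eventually_atBot.2 ⟨T, fun t htT => ?_⟩)
  by_contra! ht
  have hband : ∀ s ≤ t, α < f s := fun s hs => lt_of_lt_of_deriv_neg_of_eq hf hs
    (fun x hx hfx => (hT x (hx.2.le.trans htT) hfx.ge
      (hescape x (hx.2.le.trans htT))).trans_lt (neg_neg_of_pos hκ)) ht
  have hgrow := tendsto_atBot_atTop_of_deriv_le_neg hκ hf.differentiableOn fun s hs =>
    hT s (hs.le.trans htT) (hband s hs.le).le (hescape s (hs.le.trans htT))
  obtain ⟨s, hs, hsT⟩ := ((hgrow.eventually_gt_atTop β).and (eventually_le_atBot T)).exists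
  exact (hescape s hsT).not_gt hs

theorem eventually_atBot_lt_or_ge_of_le_deriv {α β κ : ℝ} (hf : Differentiable ℝ f)
    (hαβ : α ≤ β) (hκ : 0 < κ)
    (hd : ∀ᶠ t in atBot, α ≤ f t → f t ≤ β → κ ≤ deriv f t) :
    (∀ᶠ t in atBot, f t < α) ∨ ∀ᶠ t in atBot, β ≤ f t := by
  have := eventually_atBot_gt_or_le_of_deriv_le_neg (f := fun t => -f t) hf.neg
    (neg_le_neg hαβ) hκ <| hd.mono fun t ht hβ hα => by
      rw [deriv.fun_neg]
      linarith [ht (by linarith) (by linarith)]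
  simpa only [neg_lt_neg_iff, neg_le_neg_iff] using this

theorem eventually_atBot_le_of_deriv_le_neg_mul_sq {M κ : ℝ} (hf : Differentiable ℝ f)
    (hM : 0 < M) (hκ : 0 < κ) (hd : ∀ᶠ t in atBot, M ≤ f t → deriv f t ≤ -κ * f t ^ 2) :
    ∀ᶠ t in atBot, f t ≤ M := by
  obtain ⟨T, hT⟩ := eventually_atBot.1 hd
  refine eventually_atBot.2 ⟨T, fun t htT => ?_⟩
  by_contra! ht
  have habove : ∀ s ≤ t, M < f s := fun s hs => lt_of_lt_of_deriv_neg_of_eq hf hs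
    (fun x hx hfx => by
      have := hT x (hx.2.le.trans htT) hfx.ge
      rw [hfx] at this
      nlinarith [mul_pos hκ (pow_pos hM 2)]) ht
  -- `-f⁻¹` has derivative `≤ -κ` on `(-∞, t]`, so it would tend to `+∞` at `-∞`; yet it is negative.
  have hrecip : ∀ s ≤ t, HasDerivAt (fun s => -(f s)⁻¹) (-(-deriv f s / f s ^ 2)) s :=
    fun s hs => ((hf s).hasDerivAt.inv (hM.trans (habove s hs)).ne').neg
  have hgrow := tendsto_atBot_atTop_of_deriv_le_neg (T := t) hκ
    (fun s hs => (hrecip s hs).differentiableAt.differentiableWithinAt) fun s hs => by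
      have hfs := habove s hs.le
      rw [(hrecip s hs.le).deriv, neg_div, neg_neg, div_le_iff₀ (pow_pos (hM.trans hfs) 2)]
      linarith [hT s (hs.le.trans htT) hfs.le]
  obtain ⟨s, hs, hst⟩ := ((hgrow.eventually_gt_atTop 0).and (eventually_le_atBot t)).exists
  have := inv_pos.2 (hM.trans (habove s hst))
  linarith

end Barriers

section Riccati

variable {u : ℝ → ℝ}

theorem riccati_exists_eventually_le {c q : ℝ} (hu : Differentiable ℝ u)
    (hε : Tendsto (fun t => deriv u t + (u t ^ 2 - c * u t + q)) atBot (𝓝 0)) :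
    ∃ M, ∀ᶠ t in atBot, u t ≤ M := by
  refine ⟨2 * (|c| + |q| + 1), eventually_atBot_le_of_deriv_le_neg_mul_sq hu (by positivity)
    one_half_pos <| (hε.eventually (Iio_mem_nhds one_pos)).mono fun t ht hlarge => ?_⟩
  have hc := le_abs_self c
  have hq := neg_abs_le q
  have hc₀ := abs_nonneg c
  have hq₀ := abs_nonneg q
  have hfar : 1 ≤ u t / 2 - c := by linarith
  nlinarith [mul_le_mul_of_nonneg_left hfar (show 0 ≤ u t by linarith)]

theorem riccati_discrim_nonneg {c q : ℝ} (hu : Differentiable ℝ u)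
    (hpos : ∀ᶠ t in atBot, 0 < u t)
    (hε : Tendsto (fun t => deriv u t + (u t ^ 2 - c * u t + q)) atBot (𝓝 0)) :
    0 ≤ c ^ 2 - 4 * q := by
  by_contra! hD
  obtain ⟨M, hM⟩ := riccati_exists_eventually_le hu hε
  have hκ : 0 < -(c ^ 2 - 4 * q) / 8 := by linarith
  have hd : ∀ᶠ t in atBot, 0 ≤ u t → u t ≤ max M 0 → deriv u t ≤ -(-(c ^ 2 - 4 * q) / 8) :=
    (hε.eventually (Iio_mem_nhds hκ)).mono fun t ht _ _ => by
      nlinarith [sq_nonneg (2 * u t - c)]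
  rcases eventually_atBot_gt_or_le_of_deriv_le_neg hu (le_max_right M 0) hκ hd with h | h
  · obtain ⟨t, h1, h2⟩ := (h.and hM).exists
    linarith [le_max_left M 0]
  · obtain ⟨t, h1, h2⟩ := (h.and hpos).exists
    linarith

variable {x₁ x₂ M : ℝ}

theorem riccati_eventually_lt_of_gt (hu : Differentiable ℝ u) (hM : ∀ᶠ t in atBot, u t ≤ M)
    (h12 : x₁ ≤ x₂)
    (hε : Tendsto (fun t => deriv u t + (u t - x₁) * (u t - x₂)) atBot (𝓝 0))
    {b : ℝ} (hb : x₂ < b) : ∀ᶠ t in atBot, u t < b := by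
  obtain ⟨δ, hδ, rfl⟩ : ∃ δ > 0, b = x₂ + 2 * δ := ⟨(b - x₂) / 2, by linarith, by ring⟩
  have hd : ∀ᶠ t in atBot, x₂ + δ ≤ u t → u t ≤ max M (x₂ + 2 * δ) → deriv u t ≤ -(δ ^ 2 / 2) :=
    (hε.eventually (Iio_mem_nhds (show 0 < δ ^ 2 / 2 by positivity))).mono fun t ht h₂ _ => by
      nlinarith [mul_le_mul (show δ ≤ u t - x₁ by linarith) (show δ ≤ u t - x₂ by linarith)
        hδ.le (by linarith)]
  rcases eventually_atBot_gt_or_le_of_deriv_le_neg hu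
    (by linarith [le_max_right M (x₂ + 2 * δ)]) (by positivity) hd with h | h
  · obtain ⟨t, h1, h2⟩ := (h.and hM).exists
    linarith [le_max_left M (x₂ + 2 * δ)]
  · exact h.mono fun t ht => by linarith

theorem riccati_eventually_gt_of_lt (hu : Differentiable ℝ u) (hpos : ∀ᶠ t in atBot, 0 < u t)
    (h12 : x₁ ≤ x₂)
    (hε : Tendsto (fun t => deriv u t + (u t - x₁) * (u t - x₂)) atBot (𝓝 0))
    {a : ℝ} (ha : a < x₁) : ∀ᶠ t in atBot, a < u t := by
  have hδ : 0 < x₁ - a := by linarith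
  have hd : ∀ᶠ t in atBot, min 0 a ≤ u t → u t ≤ a → deriv u t ≤ -((x₁ - a) ^ 2 / 2) :=
    (hε.eventually (Iio_mem_nhds (show 0 < (x₁ - a) ^ 2 / 2 by positivity))).mono
      fun t ht _ h₁ => by
        nlinarith [mul_le_mul (show x₁ - a ≤ x₁ - u t by linarith)
          (show x₁ - a ≤ x₂ - u t by linarith) hδ.le (by linarith)]
  rcases eventually_atBot_gt_or_le_of_deriv_le_neg hu (min_le_right 0 a) (by positivity) hd
    with h | h
  · exact h
  · obtain ⟨t, h1, h2⟩ := (h.and hpos).exists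
    linarith [min_le_left 0 a]

theorem riccati_eventually_lt_or_ge (hu : Differentiable ℝ u)
    (hε : Tendsto (fun t => deriv u t + (u t - x₁) * (u t - x₂)) atBot (𝓝 0))
    {a b : ℝ} (ha : x₁ < a) (hab : a ≤ b) (hb : b < x₂) :
    (∀ᶠ t in atBot, u t < a) ∨ ∀ᶠ t in atBot, b ≤ u t := by
  have hκ : 0 < (a - x₁) * (x₂ - b) / 2 := by
    have := mul_pos (sub_pos.2 ha) (sub_pos.2 hb)
    positivity
  refine eventually_atBot_lt_or_ge_of_le_deriv hu hab hκ <|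
    (hε.eventually (Ioi_mem_nhds (neg_neg_of_pos hκ))).mono fun t ht h₁ h₂ => ?_
  nlinarith [mul_le_mul (show a - x₁ ≤ u t - x₁ by linarith)
    (show x₂ - b ≤ x₂ - u t by linarith) (by linarith) (by linarith)]

theorem riccati_eventually_lt_or_eventually_gt (hu : Differentiable ℝ u)
    (hε : Tendsto (fun t => deriv u t + (u t - x₁) * (u t - x₂)) atBot (𝓝 0)) (h12 : x₁ < x₂) :
    (∀ b > x₁, ∀ᶠ t in atBot, u t < b) ∨ ∀ a < x₂, ∀ᶠ t in atBot, a < u t := by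
  set m₁ := (2 * x₁ + x₂) / 3
  set m₂ := (x₁ + 2 * x₂) / 3
  have h₁ : x₁ < m₁ := by simp only [m₁]; linarith
  have hm : m₁ < m₂ := by simp only [m₁, m₂]; linarith
  have h₂ : m₂ < x₂ := by simp only [m₂]; linarith
  have hsep : ¬ ((∀ᶠ t in atBot, u t < m₁) ∧ ∀ᶠ t in atBot, m₂ ≤ u t) := fun ⟨hlt, hge⟩ => by
    obtain ⟨t, hlt, hge⟩ := (hlt.and hge).exists
    linarith
  -- The side of the fixed band `[m₁, m₂]` decides the root; narrower bands cannot disagree.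
  rcases riccati_eventually_lt_or_ge hu hε h₁ hm.le h₂ with hleft | hright
  · refine .inl fun b hb => ?_
    rcases riccati_eventually_lt_or_ge hu hε (lt_min hb h₁) ((min_le_right b m₁).trans hm.le) h₂
      with h | h
    · exact h.mono fun t ht => ht.trans_le (min_le_left b m₁)
    · exact (hsep ⟨hleft, h⟩).elim
  · refine .inr fun a ha => ?_
    rcases riccati_eventually_lt_or_ge hu hε h₁ (hm.le.trans (le_max_right ((a + x₂) / 2) m₂))
      (max_lt (by linarith) h₂) with h | h
    · exact (hsep ⟨h, hright⟩).elim
    · exact h.mono fun t ht => lt_of_lt_of_le (by linarith [le_max_left ((a + x₂) / 2) m₂]) ht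

theorem riccati_tendsto_root (hu : Differentiable ℝ u) (hpos : ∀ᶠ t in atBot, 0 < u t)
    (hM : ∀ᶠ t in atBot, u t ≤ M) (h12 : x₁ ≤ x₂)
    (hε : Tendsto (fun t => deriv u t + (u t - x₁) * (u t - x₂)) atBot (𝓝 0)) :
    ∃ L, Tendsto u atBot (𝓝 L) ∧ (L = x₁ ∨ L = x₂) := by
  have hlower := fun a => riccati_eventually_gt_of_lt (a := a) hu hpos h12 hε
  have hupper := fun b => riccati_eventually_lt_of_gt (b := b) hu hM h12 hε
  rcases h12.eq_or_lt with rfl | h12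
  · exact ⟨x₁, tendsto_order.2 ⟨hlower, hupper⟩, .inl rfl⟩
  rcases riccati_eventually_lt_or_eventually_gt hu hε h12 with hleft | hright
  · exact ⟨x₁, tendsto_order.2 ⟨hlower, hleft⟩, .inl rfl⟩
  · exact ⟨x₂, tendsto_order.2 ⟨hright, hupper⟩, .inr rfl⟩

theorem riccati_tendsto {c q : ℝ} (hu : Differentiable ℝ u) (hpos : ∀ᶠ t in atBot, 0 < u t)
    (hε : Tendsto (fun t => deriv u t + (u t ^ 2 - c * u t + q)) atBot (𝓝 0)) :
    ∃ L, Tendsto u atBot (𝓝 L) ∧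
      (L = (c - √(c ^ 2 - 4 * q)) / 2 ∨ L = (c + √(c ^ 2 - 4 * q)) / 2) := by
  obtain ⟨M, hM⟩ := riccati_exists_eventually_le hu hε
  have hsq := sq_sqrt (riccati_discrim_nonneg hu hpos hε)
  have hfactor : ∀ x, (x - (c - √(c ^ 2 - 4 * q)) / 2) * (x - (c + √(c ^ 2 - 4 * q)) / 2) =
      x ^ 2 - c * x + q := fun x => by linear_combination (-1 / 4 : ℝ) * hsq
  refine riccati_tendsto_root hu hpos hM (by linarith [sqrt_nonneg (c ^ 2 - 4 * q)]) ?_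
  simpa only [hfactor] using hε

end Riccati

namespace IsBZWavefront

variable {r b h c : ℝ} {φ ψ : ℝ → ℝ}

theorem hasDerivAt_logDeriv (hw : IsBZWavefront r b h c φ ψ) (t : ℝ) :
    HasDerivAt (fun t => deriv φ t / φ t)
      ((deriv (deriv φ) t * φ t - deriv φ t * deriv φ t) / φ t ^ 2) t :=
  (hw.phi_smooth.differentiable_deriv_two t).hasDerivAt.div
    ((hw.phi_smooth.differentiable two_ne_zero) t).hasDerivAt (hw.phi_pos t).ne'

theorem logDeriv_riccati (hw : IsBZWavefront r b h c φ ψ) :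
    Tendsto (fun t => deriv (fun t => deriv φ t / φ t) t +
      ((deriv φ t / φ t) ^ 2 - c * (deriv φ t / φ t) + (1 - r))) atBot (𝓝 0) := by
  have hlim : Tendsto (fun t => φ t - r * ψ t) atBot (𝓝 0) := by
    simpa using hw.phi_bot.sub (hw.psi_bot.const_mul r)
  refine hlim.congr fun t => ?_
  have hφ := (hw.phi_pos t).ne'
  rw [(hw.hasDerivAt_logDeriv t).deriv]
  field_simp
  linear_combination (-φ t) * hw.eq_phi t

end IsBZWavefront

theorem bz_logarithmic_derivative_limit_general
    (r b h c : ℝ)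
    (φ ψ : ℝ → ℝ) (hw : IsBZWavefront r b h c φ ψ) :
    ∃ L : ℝ, Tendsto (fun t : ℝ => deriv φ t / φ t) atBot (nhds L) ∧
      (L = (c - Real.sqrt (c ^ 2 - 4 * (1 - r))) / 2 ∨
       L = (c + Real.sqrt (c ^ 2 - 4 * (1 - r))) / 2) :=
  riccati_tendsto (fun t => (hw.hasDerivAt_logDeriv t).differentiableAt)
    (.of_forall fun t => div_pos (hw.dphi_pos t) (hw.phi_pos t)) hw.logDeriv_riccati

theorem bz_logarithmic_derivative_limit
    (r b h c : ℝ) (hr0 : 0 < r) (hr1 : r ≤ 1) (hb : 0 < b) (hh : 0 ≤ h) (hc : 0 < c)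
    (φ ψ : ℝ → ℝ) (hw : IsBZWavefront r b h c φ ψ) :
    ∃ L : ℝ, Tendsto (fun t : ℝ => deriv φ t / φ t) atBot (nhds L) ∧
      (L = (c - Real.sqrt (c ^ 2 - 4 * (1 - r))) / 2 ∨
       L = (c + Real.sqrt (c ^ 2 - 4 * (1 - r))) / 2) :=
  bz_logarithmic_derivative_limit_general r b h c φ ψ hw
end

section
/- Let r > 0, b > 0, h ≥ 0 and c ∈ ℝ. Suppose φ, ψ : ℝ → ℝ are bounded twice continuously differentiable functions satisfying, for all t ∈ ℝ, φ''(t) − c·φ'(t) + φ(t)·(1 − r − φ(t) + r·ψ(t)) = 0 and ψ''(t) − c·ψ'(t) + b·φ(t − c·h)·(1 − ψ(t)) = 0, together with 0 < φ(t) < 1, 0 < ψ(t) < 1 for all t, φ(t), ψ(t) → 0 as t → −∞ and φ(t), ψ(t) → 1 as t → +∞. Then φ'(t) → 0 and ψ'(t) → 0 as t → ±∞, and the speed is necessarily positive: c > 0. -/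
open Real Filter Asymptotics

/-!
Each profile `f ∈ {φ, ψ}` solves `f'' = c f' - F` with a bounded forcing term `F`, and takes
values in `(0, 1)`. By the mean value theorem `|f'| ≤ 1` somewhere in every interval of length
one, and Grönwall's inequality for `f'' = c f' - F` spreads this to a uniform bound on `f'`,
hence on `f''`. A function with a limit at `±∞` and bounded second derivative has `f' → 0` there:
its difference quotients over short intervals become small, and `f'` is Lipschitz.
Finally `W = ψ' - c ψ` satisfies `W' = -b φ(· - c h) (1 - ψ) < 0`, so `W` decreases strictly from
its limit `0` at `-∞` to its limit `-c` at `+∞`, which forces `c > 0`.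
-/

open Set Topology

lemma abs_deriv_le_gronwallBound {f : ℝ → ℝ} {K M D : ℝ} (hK : 0 ≤ K) (hM : 0 ≤ M)
    (hf : Differentiable ℝ f) (hf' : Differentiable ℝ (deriv f))
    (hgrowth : ∀ t, |deriv (deriv f) t| ≤ K * |deriv f t| + M)
    (hosc : ∀ s t, |f s - f t| ≤ D) (t : ℝ) :
    |deriv f t| ≤ gronwallBound D K M 1 := by
  obtain ⟨ξ, hξ, hslope⟩ := exists_deriv_eq_slope f (sub_one_lt t) hf.continuous.continuousOn
    (fun x _ => (hf x).differentiableWithinAt)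
  have hξD : |deriv f ξ| ≤ D := by
    rw [hslope, sub_sub_cancel, div_one]
    exact hosc t (t - 1)
  have hgronwall := norm_le_gronwallBound_of_norm_deriv_right_le hf'.continuous.continuousOn
    (fun x _ => (hf' x).hasDerivAt.hasDerivWithinAt) hξD (fun x _ => hgrowth x) t
    ⟨hξ.2.le, le_rfl⟩
  exact hgronwall.trans <| gronwallBound_mono ((abs_nonneg _).trans hξD) hM hK
    (by linarith [hξ.1])

lemma tendsto_deriv_zero_of_abs_deriv_deriv_le {l : Filter ℝ} {f : ℝ → ℝ} {L K : ℝ}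
    (hl : ∀ δ, Tendsto (· + δ) l l) (hf : Differentiable ℝ f)
    (hf' : Differentiable ℝ (deriv f)) (hK : ∀ t, |deriv (deriv f) t| ≤ K)
    (hlim : Tendsto f l (𝓝 L)) :
    Tendsto (deriv f) l (𝓝 0) := by
  have hK0 : 0 ≤ K := (abs_nonneg _).trans (hK 0)
  rw [Metric.tendsto_nhds]
  intro ε hε
  set δ := ε / (2 * (K + 1)) with hδ_def
  have hδ : 0 < δ := by positivity
  have hKδ : K * δ < ε / 2 := by
    rw [hδ_def, mul_div_assoc', div_lt_div_iff₀ (by positivity) two_pos]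
    nlinarith
  have hnear := Metric.tendsto_nhds.mp hlim (ε * δ / 4) (by positivity)
  filter_upwards [hnear, hl δ hnear] with t ht htδ
  simp only [mem_preimage, mem_ofPred_eq, Real.dist_eq] at ht htδ ⊢
  obtain ⟨ξ, hξ, hslope⟩ := exists_deriv_eq_slope f (lt_add_of_pos_right t hδ)
    hf.continuous.continuousOn (fun x _ => (hf x).differentiableWithinAt)
  have hξ_small : |deriv f ξ| < ε / 2 := by
    rw [hslope, add_sub_cancel_left, abs_div, abs_of_pos hδ, div_lt_iff₀ hδ]
    calc |f (t + δ) - f t| ≤ |f (t + δ) - L| + |L - f t| := abs_sub_le _ _ _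
      _ < ε / 2 * δ := by rw [abs_sub_comm L]; linarith
  have hlip : |deriv f t - deriv f ξ| ≤ K * δ := calc
    _ ≤ K * |t - ξ| := Convex.norm_image_sub_le_of_norm_deriv_le (fun x _ => hf' x)
        (fun x _ => hK x) (convex_Icc t (t + δ)) ⟨hξ.1.le, hξ.2.le⟩ ⟨le_rfl, by linarith⟩
    _ ≤ K * δ := by
      gcongr
      rw [abs_sub_comm, abs_of_pos (sub_pos.mpr hξ.1)]
      linarith [hξ.2]
  calc |deriv f t - 0| = |(deriv f t - deriv f ξ) + deriv f ξ| := by ring_nf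
    _ ≤ |deriv f t - deriv f ξ| + |deriv f ξ| := abs_add_le _ _
    _ < ε := by linarith

lemma tendsto_deriv_zero_of_deriv_deriv_eq {l : Filter ℝ} {f F : ℝ → ℝ} {c M D L : ℝ}
    (hl : ∀ δ, Tendsto (· + δ) l l) (hf : ContDiff ℝ 2 f)
    (hode : ∀ t, deriv (deriv f) t - c * deriv f t + F t = 0) (hF : ∀ t, |F t| ≤ M)
    (hosc : ∀ s t, |f s - f t| ≤ D) (hlim : Tendsto f l (𝓝 L)) :
    Tendsto (deriv f) l (𝓝 0) := by
  have hf₁ : Differentiable ℝ f := hf.differentiable two_ne_zero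
  have hf₂ : Differentiable ℝ (deriv f) := hf.differentiable_deriv_two
  have hgrowth : ∀ t, |deriv (deriv f) t| ≤ |c| * |deriv f t| + M := fun t => by
    rw [show deriv (deriv f) t = c * deriv f t - F t by linarith [hode t], ← abs_mul]
    exact (abs_sub _ _).trans (by linarith [hF t])
  have hB := abs_deriv_le_gronwallBound (abs_nonneg c) ((abs_nonneg _).trans (hF 0)) hf₁ hf₂
    hgrowth hosc
  refine tendsto_deriv_zero_of_abs_deriv_deriv_le (K := |c| * gronwallBound D |c| M 1 + M) hl
    hf₁ hf₂ (fun t => (hgrowth t).trans ?_) hlim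
  gcongr
  exact hB t

lemma StrictAnti.lt_of_tendsto_atBot_atTop {α β : Type*} [LinearOrder α] [Nontrivial α]
    [TopologicalSpace β] [Preorder β] [OrderClosedTopology β] {f : α → β} {a b : β}
    (hf : StrictAnti f) (hbot : Tendsto f atBot (𝓝 a)) (htop : Tendsto f atTop (𝓝 b)) :
    b < a := by
  obtain ⟨x, y, hxy⟩ := exists_pair_lt α
  exact ((hf.antitone.le_of_tendsto htop y).trans_lt (hf hxy)).trans_le
    (hf.antitone.ge_of_tendsto hbot x)

lemma pos_of_deriv_deriv_lt_mul_deriv {f : ℝ → ℝ} {c a b : ℝ} (hab : a < b)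
    (hf : ContDiff ℝ 2 f) (hlt : ∀ t, deriv (deriv f) t < c * deriv f t)
    (hbot : Tendsto f atBot (𝓝 a)) (htop : Tendsto f atTop (𝓝 b))
    (hdbot : Tendsto (deriv f) atBot (𝓝 0)) (hdtop : Tendsto (deriv f) atTop (𝓝 0)) :
    0 < c := by
  have hW : StrictAnti fun t => deriv f t - c * f t := by
    refine strictAnti_of_deriv_neg fun t => ?_
    rw [((hf.differentiable_deriv_two t).hasDerivAt.fun_sub
      ((hf.differentiable two_ne_zero t).hasDerivAt.const_mul c)).deriv]
    linarith [hlt t]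
  have := hW.lt_of_tendsto_atBot_atTop (hdbot.sub (hbot.const_mul c))
    (hdtop.sub (htop.const_mul c))
  nlinarith

lemma abs_mul_one_sub_sub_add_mul_le {x y : ℝ} (r : ℝ) (hx : x ∈ Icc 0 1) (hy : y ∈ Icc 0 1) :
    |x * (1 - r - x + r * y)| ≤ 1 + |r| := by
  have hfactor : |1 - r - x + r * y| ≤ 1 + |r| := calc
    _ = |(1 - x) - r * (1 - y)| := by ring_nf
    _ ≤ |1 - x| + |r * (1 - y)| := abs_sub _ _
    _ = (1 - x) + |r| * (1 - y) := by
      rw [abs_mul, abs_of_nonneg (sub_nonneg.mpr hx.2), abs_of_nonneg (sub_nonneg.mpr hy.2)]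
    _ ≤ 1 + |r| := by nlinarith [abs_nonneg r, hx.1, hy.1]
  rw [abs_mul, abs_of_nonneg hx.1]
  exact (mul_le_of_le_one_left (abs_nonneg _) hx.2).trans hfactor

theorem bz_derivatives_vanish_and_speed_positive_general
    (r b h c : ℝ) (hb : 0 < b)
    (φ ψ : ℝ → ℝ)
    (hφ : ContDiff ℝ 2 φ) (hψ : ContDiff ℝ 2 ψ)
    (heq1 : ∀ t : ℝ,
      deriv (deriv φ) t - c * deriv φ t + φ t * (1 - r - φ t + r * ψ t) = 0)
    (heq2 : ∀ t : ℝ,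
      deriv (deriv ψ) t - c * deriv ψ t + b * φ (t - c * h) * (1 - ψ t) = 0)
    (hφ01 : ∀ t : ℝ, 0 < φ t ∧ φ t < 1) (hψ01 : ∀ t : ℝ, 0 < ψ t ∧ ψ t < 1)
    (hφbot : Tendsto φ atBot (nhds 0)) (hψbot : Tendsto ψ atBot (nhds 0))
    (hφtop : Tendsto φ atTop (nhds 1)) (hψtop : Tendsto ψ atTop (nhds 1)) :
    Tendsto (deriv φ) atBot (nhds 0) ∧ Tendsto (deriv φ) atTop (nhds 0) ∧
    Tendsto (deriv ψ) atBot (nhds 0) ∧ Tendsto (deriv ψ) atTop (nhds 0) ∧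
    0 < c := by
  have hosc : ∀ {f : ℝ → ℝ}, (∀ t, 0 < f t ∧ f t < 1) → ∀ s t, |f s - f t| ≤ 1 :=
    fun h01 s t => (abs_sub_lt_of_nonneg_of_lt (h01 s).1.le (h01 s).2 (h01 t).1.le (h01 t).2).le
  have hFψ_pos : ∀ t, 0 < b * φ (t - c * h) * (1 - ψ t) := fun t =>
    mul_pos (mul_pos hb (hφ01 _).1) (sub_pos.mpr (hψ01 t).2)
  have hFφ : ∀ t, |φ t * (1 - r - φ t + r * ψ t)| ≤ 1 + |r| := fun t =>
    abs_mul_one_sub_sub_add_mul_le r ⟨(hφ01 t).1.le, (hφ01 t).2.le⟩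
      ⟨(hψ01 t).1.le, (hψ01 t).2.le⟩
  have hFψ : ∀ t, |b * φ (t - c * h) * (1 - ψ t)| ≤ b := fun t => by
    rw [abs_of_pos (hFψ_pos t)]
    nlinarith [(hφ01 (t - c * h)).2, (hψ01 t).1, mul_pos hb (hφ01 (t - c * h)).1]
  have hbot : ∀ δ : ℝ, Tendsto (· + δ) atBot atBot := fun δ =>
    tendsto_atBot_add_const_right _ δ tendsto_id
  have htop : ∀ δ : ℝ, Tendsto (· + δ) atTop atTop := fun δ =>
    tendsto_atTop_add_const_right _ δ tendsto_id
  have hψ'bot := tendsto_deriv_zero_of_deriv_deriv_eq hbot hψ heq2 hFψ (hosc hψ01) hψbot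
  have hψ'top := tendsto_deriv_zero_of_deriv_deriv_eq htop hψ heq2 hFψ (hosc hψ01) hψtop
  refine ⟨tendsto_deriv_zero_of_deriv_deriv_eq hbot hφ heq1 hFφ (hosc hφ01) hφbot,
    tendsto_deriv_zero_of_deriv_deriv_eq htop hφ heq1 hFφ (hosc hφ01) hφtop, hψ'bot, hψ'top,
    pos_of_deriv_deriv_lt_mul_deriv one_pos hψ (fun t => ?_) hψbot hψtop hψ'bot hψ'top⟩
  linarith [heq2 t, hFψ_pos t]

theorem bz_derivatives_vanish_and_speed_positive
    (r b h c : ℝ) (hr : 0 < r) (hb : 0 < b) (hh : 0 ≤ h)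
    (φ ψ : ℝ → ℝ)
    (hφ : ContDiff ℝ 2 φ) (hψ : ContDiff ℝ 2 ψ)
    (hφbd : ∃ M : ℝ, ∀ t : ℝ, |φ t| ≤ M) (hψbd : ∃ M : ℝ, ∀ t : ℝ, |ψ t| ≤ M)
    (heq1 : ∀ t : ℝ,
      deriv (deriv φ) t - c * deriv φ t + φ t * (1 - r - φ t + r * ψ t) = 0)
    (heq2 : ∀ t : ℝ,
      deriv (deriv ψ) t - c * deriv ψ t + b * φ (t - c * h) * (1 - ψ t) = 0)
    (hφ01 : ∀ t : ℝ, 0 < φ t ∧ φ t < 1) (hψ01 : ∀ t : ℝ, 0 < ψ t ∧ ψ t < 1)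
    (hφbot : Tendsto φ atBot (nhds 0)) (hψbot : Tendsto ψ atBot (nhds 0))
    (hφtop : Tendsto φ atTop (nhds 1)) (hψtop : Tendsto ψ atTop (nhds 1)) :
    Tendsto (deriv φ) atBot (nhds 0) ∧ Tendsto (deriv φ) atTop (nhds 0) ∧
    Tendsto (deriv ψ) atBot (nhds 0) ∧ Tendsto (deriv ψ) atTop (nhds 0) ∧
    0 < c :=
  bz_derivatives_vanish_and_speed_positive_general r b h c hb φ ψ hφ hψ heq1 heq2 hφ01 hψ01 hφbot
    hψbot hφtop hψtop
end
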